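/- Let (V, Φ) be a reduced irreducible root system with base Δ and let α ∈ Δ. If α is special or co-special, then the unique Δ-dominant element of W·α equals the unique (Δ \ {α})-dominant element of W_α·α; equivalently, there exists w ∈ W_α such that w·α is Δ-dominant. -/

import Mathlib

/-!
Take `w ∈ W_α` with `w α` of maximal height. Elements of `W_α` fix the `α`-coordinate, so
`v = w α` is a positive root of the length of `α` with `α`-coordinate `1`, and maximality gives
`(v, a) ≥ 0` for `a ∈ Δ \ {α}`, as `s_a` would raise the height. If `(v, α) < 0`, the Cartan
integer is at most `-1`, so `s_α v` is a positive root of the length of `α` with `α`-coordinate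
at least `2`. Comparing it with the highest root contradicts `m_{α^h}(α) = 1`; since the lengths
agree, its coroot also has coefficient at least `2` on `α^∨`, contradicting `m^∨_{α^{h₂}}(α) = 1`.
The highest root exists because irreducibility forces a dominant positive root to have full
support; the highest coroot is the highest root of the dual root system.
-/
open scoped BigOperators

/-- A reduced irreducible root system, with a choice of base of simple roots,
in a finite-dimensional `ℚ`-vector space `V` equipped with a positive definite
symmetric bilinear form. -/
structure RootSystemBase (V : Type*) [AddCommGroup V] [Module ℚ V] : Type _ where
  /-- the symmetric bilinear form `( , )` -/
  B : V →ₗ[ℚ] V →ₗ[ℚ] ℚ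
  B_symm : ∀ u v : V, B u v = B v u
  B_posdef : ∀ v : V, v ≠ 0 → 0 < B v v
  /-- the (finite) set of roots -/
  Φ : Finset V
  zero_notMem : (0 : V) ∉ Φ
  span_top : Submodule.span ℚ (Φ : Set V) = ⊤
  reflect_mem : ∀ β ∈ Φ, ∀ γ ∈ Φ, γ - (2 * B β γ / B β β) • β ∈ Φ
  integral : ∀ β ∈ Φ, ∀ γ ∈ Φ, ∃ n : ℤ, 2 * B β γ / B β β = (n : ℚ)
  reduced : ∀ β ∈ Φ, ∀ c : ℚ, c • β ∈ Φ → c = 1 ∨ c = -1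
  irreducible : ∀ s ⊆ Φ, s.Nonempty →
    (∀ β ∈ s, ∀ γ ∈ Φ, γ ∉ s → B β γ = 0) → s = Φ
  /-- the base of simple roots -/
  Δ : Finset V
  Δ_sub : Δ ⊆ Φ
  Δ_indep : LinearIndependent ℚ (Subtype.val : {x : V // x ∈ Δ} → V)
  /-- `coord v α` is the coefficient of the simple root `α` when `v` is written in the basis `Δ` -/
  coord : V → V → ℚ
  coord_spec : ∀ v : V, v = ∑ α ∈ Δ, coord v α • α
  coord_int : ∀ β ∈ Φ, ∀ α ∈ Δ, ∃ n : ℤ, coord β α = (n : ℚ)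
  pos_or_neg : ∀ β ∈ Φ, (∀ α ∈ Δ, 0 ≤ coord β α) ∨ (∀ α ∈ Δ, coord β α ≤ 0)

namespace RootSystemBase

variable {V : Type*} [AddCommGroup V] [Module ℚ V] (P : RootSystemBase V)

/-- the coroot `β^∨ = 2β/(β,β)` -/
noncomputable def coroot (β : V) : V := (2 / P.B β β) • β

/-- `m^∨_β(α)`: the coefficient of `α^∨` when `β^∨` is written in the basis `Δ^∨` -/
noncomputable def corootMult (β α : V) : ℚ := P.coord (P.coroot β) α * (P.B α α / 2)

/-- the positive roots `Φ⁺` determined by the base `Δ` -/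
noncomputable def posRoots : Finset V := P.Φ.filter (fun β => ∀ α ∈ P.Δ, 0 ≤ P.coord β α)

/-- a root is long if its length is maximal -/
def IsLong (β : V) : Prop := ∀ γ ∈ P.Φ, P.B γ γ ≤ P.B β β

/-- a root is short if its length is minimal -/
def IsShort (β : V) : Prop := ∀ γ ∈ P.Φ, P.B β β ≤ P.B γ γ

/-- `h` is the highest root: every (positive) root has smaller multiplicities -/
def IsHighestRoot (h : V) : Prop :=
  h ∈ P.Φ ∧ ∀ β ∈ P.posRoots, ∀ α ∈ P.Δ, P.coord β α ≤ P.coord h α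

/-- `h₂` is the root whose coroot is the highest root of the dual system `Φ^∨` -/
def IsDualHighest (h₂ : V) : Prop :=
  h₂ ∈ P.Φ ∧ ∀ β ∈ P.posRoots, ∀ α ∈ P.Δ, P.corootMult β α ≤ P.corootMult h₂ α

/-- a simple root `α` is special if `m_{α^h}(α) = 1` -/
def IsSpecial (α : V) : Prop :=
  α ∈ P.Δ ∧ ∀ h : V, P.IsHighestRoot h → P.coord h α = 1

/-- a simple root `α` is co-special if `m^∨_{α^{h₂}}(α) = 1` -/
def IsCospecial (α : V) : Prop :=
  α ∈ P.Δ ∧ ∀ h₂ : V, P.IsDualHighest h₂ → P.corootMult h₂ α = 1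

/-- the reflection `s_β` in a root `β` (junk value `id` if `(β,β) = 0`) -/
noncomputable def refl (β : V) : V ≃ₗ[ℚ] V :=
  if h : P.B β β ≠ 0 then
    Module.reflection (x := β) (f := (2 / P.B β β) • P.B β)
      (by simp only [LinearMap.smul_apply, smul_eq_mul]; field_simp)
  else LinearEquiv.refl ℚ V

/-- the Weyl group `W`, as a group of linear automorphisms of `V` -/
noncomputable def weylGroup : Subgroup (V ≃ₗ[ℚ] V) :=
  Subgroup.closure { g | ∃ β ∈ P.Φ, g = P.refl β }

/-- the Weyl group `W_α` of the maximal Levi determined by `α ∈ Δ`, generated by the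
simple reflections `s_{α'}`, `α' ∈ Δ \ {α}` -/
noncomputable def leviWeyl (α : V) : Subgroup (V ≃ₗ[ℚ] V) :=
  Subgroup.closure { g | ∃ α' ∈ P.Δ, α' ≠ α ∧ g = P.refl α' }

/-- `v` is `Δ`-dominant -/
def IsDominant (v : V) : Prop := ∀ α ∈ P.Δ, 0 ≤ P.B v α

/-- `v` is `(Δ \ {α})`-dominant -/
def IsDominantAway (α v : V) : Prop := ∀ α' ∈ P.Δ, α' ≠ α → 0 ≤ P.B v α'

/-- `χ` is quasi-constant -/
def IsQuasiConstant (χ : V) : Prop :=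
  ∀ β ∈ P.Φ, P.B χ (P.coroot β) ≠ 0 → ∀ w ∈ P.weylGroup,
    P.B χ (w (P.coroot β)) / P.B χ (P.coroot β) ∈ ({-1, 0, 1} : Set ℚ)

end RootSystemBase

namespace RootSystemBase

variable {V : Type*} [AddCommGroup V] [Module ℚ V] (P : RootSystemBase V)

lemma ne_zero_of_mem {β : V} (hβ : β ∈ P.Φ) : β ≠ 0 := fun h => P.zero_notMem (h ▸ hβ)

lemma B_self_pos {β : V} (hβ : β ∈ P.Φ) : 0 < P.B β β := P.B_posdef β (P.ne_zero_of_mem hβ)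

lemma B_self_ne_zero {β : V} (hβ : β ∈ P.Φ) : P.B β β ≠ 0 := (P.B_self_pos hβ).ne'

lemma neg_mem {β : V} (hβ : β ∈ P.Φ) : -β ∈ P.Φ := by
  have h := P.reflect_mem β hβ β hβ
  rwa [mul_div_cancel_right₀ _ (P.B_self_ne_zero hβ), two_smul, sub_add_cancel_left] at h

lemma coord_eq_of_eq_sum {v : V} {f : V → ℚ} (h : v = ∑ a ∈ P.Δ, f a • a) {a : V}
    (ha : a ∈ P.Δ) : P.coord v a = f a := by
  have hsum : ∑ x ∈ P.Δ.attach, (P.coord v x.1 - f x.1) • x.1 = 0 := by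
    rw [Finset.sum_attach P.Δ (fun x => (P.coord v x - f x) • x)]
    simp only [sub_smul, Finset.sum_sub_distrib, ← P.coord_spec v, ← h, sub_self]
  have := linearIndependent_iff'.mp P.Δ_indep P.Δ.attach _ hsum ⟨a, ha⟩ (Finset.mem_attach _ _)
  exact sub_eq_zero.mp this

lemma eq_of_coord_eq {u v : V} (h : ∀ a ∈ P.Δ, P.coord u a = P.coord v a) : u = v := by
  rw [P.coord_spec u, P.coord_spec v]
  exact Finset.sum_congr rfl fun a ha => by rw [h a ha]

lemma coord_self {a : V} (ha : a ∈ P.Δ) : P.coord a a = 1 := by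
  classical
  refine P.coord_eq_of_eq_sum (f := fun x => if x = a then 1 else 0) ?_ ha |>.trans (if_pos rfl)
  simp [ite_smul, ha]

lemma coord_of_ne {a b : V} (ha : a ∈ P.Δ) (hb : b ∈ P.Δ) (hba : b ≠ a) : P.coord a b = 0 := by
  classical
  refine P.coord_eq_of_eq_sum (f := fun x => if x = a then 1 else 0) ?_ hb |>.trans (if_neg hba)
  simp [ite_smul, ha]

lemma coord_add (u v : V) {a : V} (ha : a ∈ P.Δ) :
    P.coord (u + v) a = P.coord u a + P.coord v a := by
  refine P.coord_eq_of_eq_sum (f := fun x => P.coord u x + P.coord v x) ?_ ha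
  simp only [add_smul, Finset.sum_add_distrib, ← P.coord_spec]

lemma coord_smul (c : ℚ) (v : V) {a : V} (ha : a ∈ P.Δ) :
    P.coord (c • v) a = c * P.coord v a := by
  refine P.coord_eq_of_eq_sum (f := fun x => c * P.coord v x) ?_ ha
  simp only [mul_smul, ← Finset.smul_sum, ← P.coord_spec]

lemma coord_neg (v : V) {a : V} (ha : a ∈ P.Δ) : P.coord (-v) a = -P.coord v a := by
  simpa using P.coord_smul (-1) v ha

lemma coord_sub (u v : V) {a : V} (ha : a ∈ P.Δ) :
    P.coord (u - v) a = P.coord u a - P.coord v a := by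
  rw [sub_eq_add_neg, P.coord_add _ _ ha, P.coord_neg _ ha, sub_eq_add_neg]

lemma B_eq_sum_coord_left (u v : V) : P.B u v = ∑ a ∈ P.Δ, P.coord u a * P.B a v := by
  conv_lhs => rw [P.coord_spec u]
  simp

lemma B_eq_sum_coord_right (u v : V) : P.B u v = ∑ a ∈ P.Δ, P.coord v a * P.B u a := by
  conv_lhs => rw [P.coord_spec v]
  simp

lemma refl_apply {β : V} (hβ : P.B β β ≠ 0) (v : V) :
    P.refl β v = v - (2 * P.B β v / P.B β β) • β := by
  rw [refl, dif_pos hβ, Module.reflection_apply]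
  congr 2
  simp only [LinearMap.smul_apply, smul_eq_mul]
  ring

lemma refl_inv (β : V) : (P.refl β)⁻¹ = P.refl β := by
  unfold refl
  split
  · exact Module.reflection_symm _
  · rfl

lemma refl_refl (β v : V) : P.refl β (P.refl β v) = v := by
  nth_rw 1 [← P.refl_inv β]
  exact (P.refl β).symm_apply_apply v

lemma B_refl_refl (β u v : V) : P.B (P.refl β u) (P.refl β v) = P.B u v := by
  by_cases hβ : P.B β β ≠ 0
  · simp only [P.refl_apply hβ, map_sub, map_smul, LinearMap.sub_apply, LinearMap.smul_apply,
      smul_eq_mul, P.B_symm u β]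
    field_simp
    ring
  · rw [refl, dif_neg hβ]
    rfl

lemma refl_mem {β γ : V} (hβ : β ∈ P.Φ) (hγ : γ ∈ P.Φ) : P.refl β γ ∈ P.Φ := by
  rw [P.refl_apply (P.B_self_ne_zero hβ)]
  exact P.reflect_mem β hβ γ hγ

lemma refl_eq_self {β v : V} (h : P.B β v = 0) : P.refl β v = v := by
  by_cases hβ : P.B β β ≠ 0
  · simp [P.refl_apply hβ, h]
  · rw [refl, dif_neg hβ]
    rfl

lemma coord_refl_self {a : V} (ha : a ∈ P.Δ) (v : V) :
    P.coord (P.refl a v) a = P.coord v a - 2 * P.B a v / P.B a a := by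
  rw [P.refl_apply (P.B_self_ne_zero (P.Δ_sub ha)), P.coord_sub _ _ ha, P.coord_smul _ _ ha,
    P.coord_self ha, mul_one]

lemma coord_refl_of_ne {a b : V} (ha : a ∈ P.Δ) (hb : b ∈ P.Δ) (hba : b ≠ a) (v : V) :
    P.coord (P.refl a v) b = P.coord v b := by
  rw [P.refl_apply (P.B_self_ne_zero (P.Δ_sub ha)), P.coord_sub _ _ hb, P.coord_smul _ _ hb,
    P.coord_of_ne ha hb hba, mul_zero, sub_zero]

lemma B_apply_apply_of_mem_weylGroup {w : V ≃ₗ[ℚ] V} (hw : w ∈ P.weylGroup) (u v : V) :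
    P.B (w u) (w v) = P.B u v := by
  induction hw using Subgroup.closure_induction'' generalizing u v with
  | mem x hx => obtain ⟨β, -, rfl⟩ := hx; exact P.B_refl_refl β u v
  | inv_mem x hx => obtain ⟨β, -, rfl⟩ := hx; rw [P.refl_inv]; exact P.B_refl_refl β u v
  | one => rfl
  | mul x y _ _ hx hy => exact (hx _ _).trans (hy u v)

lemma apply_mem_of_mem_weylGroup {w : V ≃ₗ[ℚ] V} (hw : w ∈ P.weylGroup) {β : V}
    (hβ : β ∈ P.Φ) : w β ∈ P.Φ := by
  induction hw using Subgroup.closure_induction'' generalizing β with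
  | mem x hx => obtain ⟨γ, hγ, rfl⟩ := hx; exact P.refl_mem hγ hβ
  | inv_mem x hx => obtain ⟨γ, hγ, rfl⟩ := hx; rw [P.refl_inv]; exact P.refl_mem hγ hβ
  | one => exact hβ
  | mul x y _ _ hx hy => exact hx (hy hβ)

lemma leviWeyl_le_weylGroup (α : V) : P.leviWeyl α ≤ P.weylGroup := by
  refine Subgroup.closure_mono ?_
  rintro g ⟨a, ha, -, rfl⟩
  exact ⟨a, P.Δ_sub ha, rfl⟩

lemma coord_apply_of_mem_leviWeyl {α : V} (hα : α ∈ P.Δ) {w : V ≃ₗ[ℚ] V}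
    (hw : w ∈ P.leviWeyl α) (v : V) : P.coord (w v) α = P.coord v α := by
  induction hw using Subgroup.closure_induction'' generalizing v with
  | mem x hx => obtain ⟨a, ha, hne, rfl⟩ := hx; exact P.coord_refl_of_ne ha hα hne.symm v
  | inv_mem x hx =>
      obtain ⟨a, ha, hne, rfl⟩ := hx; rw [P.refl_inv]; exact P.coord_refl_of_ne ha hα hne.symm v
  | one => rfl
  | mul x y _ _ hx hy => exact (hx _).trans (hy v)

/-! Positive roots and height -/

lemma mem_posRoots {β : V} : β ∈ P.posRoots ↔ β ∈ P.Φ ∧ ∀ a ∈ P.Δ, 0 ≤ P.coord β a :=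
  Finset.mem_filter

lemma simple_mem_posRoots {a : V} (ha : a ∈ P.Δ) : a ∈ P.posRoots := by
  refine P.mem_posRoots.mpr ⟨P.Δ_sub ha, fun b hb => ?_⟩
  rcases eq_or_ne b a with rfl | hba
  · rw [P.coord_self ha]; norm_num
  · rw [P.coord_of_ne ha hb hba]

lemma mem_posRoots_or_neg_mem {β : V} (hβ : β ∈ P.Φ) : β ∈ P.posRoots ∨ -β ∈ P.posRoots := by
  refine (P.pos_or_neg β hβ).imp (fun h => P.mem_posRoots.mpr ⟨hβ, h⟩) fun h => ?_
  refine P.mem_posRoots.mpr ⟨P.neg_mem hβ, fun a ha => ?_⟩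
  rw [P.coord_neg _ ha]
  linarith [h a ha]

noncomputable def ht (v : V) : ℚ := ∑ a ∈ P.Δ, P.coord v a

lemma ht_refl {a : V} (ha : a ∈ P.Δ) (v : V) :
    P.ht (P.refl a v) = P.ht v - 2 * P.B a v / P.B a a := by
  classical
  rw [ht, ← Finset.add_sum_erase _ _ ha, P.coord_refl_self ha, ht, ← Finset.add_sum_erase _ _ ha,
    Finset.sum_congr rfl fun b hb => P.coord_refl_of_ne ha (Finset.mem_of_mem_erase hb)
      (Finset.ne_of_mem_erase hb) v]
  ring

lemma ht_lt_ht_refl {a v : V} (ha : a ∈ P.Δ) (h : P.B v a < 0) : P.ht v < P.ht (P.refl a v) := by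
  have : 2 * P.B a v / P.B a a < 0 :=
    div_neg_of_neg_of_pos (by rw [P.B_symm]; linarith) (P.B_self_pos (P.Δ_sub ha))
  rw [P.ht_refl ha]
  linarith

lemma ht_refl_lt_ht {a v : V} (ha : a ∈ P.Δ) (h : 0 < P.B v a) : P.ht (P.refl a v) < P.ht v := by
  have : 0 < 2 * P.B a v / P.B a a :=
    div_pos (by rw [P.B_symm]; linarith) (P.B_self_pos (P.Δ_sub ha))
  rw [P.ht_refl ha]
  linarith

lemma sq_B_lt_mul_B_self {β γ : V} (hβ : β ∈ P.Φ) (hγ : γ ∈ P.Φ) (h₁ : β ≠ γ) (h₂ : β ≠ -γ) :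
    P.B β γ ^ 2 < P.B β β * P.B γ γ := by
  have hγγ := P.B_self_pos hγ
  set t : ℚ := P.B β γ / P.B γ γ
  have hne : β - t • γ ≠ 0 := by
    intro h
    rw [sub_eq_zero] at h
    rcases P.reduced γ hγ t (h ▸ hβ) with ht | ht
    · exact h₁ (by rw [h, ht, one_smul])
    · exact h₂ (by rw [h, ht, neg_one_smul])
  have hpos := P.B_posdef _ hne
  have hexp : P.B (β - t • γ) (β - t • γ) = P.B β β - P.B β γ ^ 2 / P.B γ γ := by
    simp only [t, map_sub, map_smul, LinearMap.sub_apply, LinearMap.smul_apply, smul_eq_mul,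
      P.B_symm γ β]
    field_simp
    ring
  rw [hexp, sub_pos, div_lt_iff₀ hγγ] at hpos
  linarith

/-- One of the two Cartan integers is `1`, by the strict Cauchy–Schwarz inequality. -/
lemma sub_mem_of_B_pos {β γ : V} (hβ : β ∈ P.Φ) (hγ : γ ∈ P.Φ) (hpos : 0 < P.B β γ)
    (hne : β ≠ γ) : β - γ ∈ P.Φ := by
  have hβγ : β ≠ -γ := by
    rintro rfl
    have := P.B_self_pos hγ
    simp only [map_neg, LinearMap.neg_apply] at hpos
    linarith
  obtain ⟨n, hn⟩ := P.integral β hβ γ hγ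
  obtain ⟨m, hm⟩ := P.integral γ hγ β hβ
  have hBβ := P.B_self_pos hβ
  have hBγ := P.B_self_pos hγ
  have hn0 : (0 : ℚ) < n := by rw [← hn]; positivity
  have hm0 : (0 : ℚ) < m := by rw [← hm, P.B_symm γ β]; positivity
  have hnm : (n : ℚ) * m < 4 := by
    rw [← hn, ← hm, P.B_symm γ β, div_mul_div_comm, div_lt_iff₀ (by positivity)]
    nlinarith [P.sq_B_lt_mul_B_self hβ hγ hne hβγ]
  have hnm' : n * m < 4 := by exact_mod_cast hnm
  have hn1 : 1 ≤ n := by exact_mod_cast hn0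
  have hm1 : 1 ≤ m := by exact_mod_cast hm0
  obtain rfl | rfl : n = 1 ∨ m = 1 := by
    by_contra! h
    nlinarith [h.1.lt_of_le' hn1, h.2.lt_of_le' hm1]
  · have h := P.neg_mem (P.reflect_mem β hβ γ hγ)
    rwa [hn, Int.cast_one, one_smul, neg_sub] at h
  · have h := P.reflect_mem γ hγ β hβ
    rwa [hm, Int.cast_one, one_smul] at h

lemma B_simple_nonpos {a b : V} (ha : a ∈ P.Δ) (hb : b ∈ P.Δ) (hne : a ≠ b) : P.B a b ≤ 0 := by
  by_contra! h
  rcases P.pos_or_neg _ (P.sub_mem_of_B_pos (P.Δ_sub ha) (P.Δ_sub hb) h hne) with hp | hn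
  · have hc := hp b hb
    rw [P.coord_sub _ _ hb, P.coord_of_ne ha hb hne.symm, P.coord_self hb] at hc
    linarith
  · have hc := hn a ha
    rw [P.coord_sub _ _ ha, P.coord_self ha, P.coord_of_ne hb ha hne] at hc
    linarith

lemma exists_coord_pos_B_pos {β : V} (hβ : β ∈ P.posRoots) :
    ∃ a ∈ P.Δ, 0 < P.coord β a ∧ 0 < P.B β a := by
  obtain ⟨hβΦ, hβnn⟩ := P.mem_posRoots.mp hβ
  have hpos := P.B_self_pos hβΦ
  rw [P.B_eq_sum_coord_right] at hpos
  obtain ⟨a, ha, h⟩ := Finset.exists_lt_of_sum_lt (f := fun _ => (0 : ℚ)) (by simpa using hpos)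
  rcases pos_and_pos_or_neg_and_neg_of_mul_pos h with h' | h'
  · exact ⟨a, ha, h'⟩
  · exact absurd (hβnn a ha) (not_le.mpr h'.1)

/-- Otherwise `β` would be a multiple of `a`. -/
lemma refl_mem_posRoots_of_B_pos {β a : V} (hβ : β ∈ P.posRoots) (hβΔ : β ∉ P.Δ) (ha : a ∈ P.Δ)
    (hB : 0 < P.B β a) : P.refl a β ∈ P.posRoots := by
  obtain ⟨hβΦ, hβnn⟩ := P.mem_posRoots.mp hβ
  have hmem := P.refl_mem (P.Δ_sub ha) hβΦ
  refine (P.pos_or_neg _ hmem).elim (fun h => P.mem_posRoots.mpr ⟨hmem, h⟩) fun hneg => ?_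
  have hβa : β = P.coord β a • a := by
    refine P.eq_of_coord_eq fun b hb => ?_
    rcases eq_or_ne b a with rfl | hba
    · rw [P.coord_smul _ _ hb, P.coord_self hb, mul_one]
    · rw [P.coord_smul _ _ hb, P.coord_of_ne ha hb hba, mul_zero]
      exact le_antisymm (P.coord_refl_of_ne ha hb hba β ▸ hneg b hb) (hβnn b hb)
  rcases P.reduced a (P.Δ_sub ha) _ (hβa ▸ hβΦ) with h | h
  · exact absurd (by rwa [hβa, h, one_smul]) hβΔ
  · linarith [hβnn a ha]

/-- A minimal counterexample in height is not simple, and a simple reflection lowers its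
height. -/
theorem posRoots_induction {Q : V → Prop} (simple : ∀ a ∈ P.Δ, Q a)
    (refl : ∀ γ ∈ P.posRoots, ∀ a ∈ P.Δ, Q γ → Q (P.refl a γ)) {β : V} (hβ : β ∈ P.posRoots) :
    Q β := by
  classical
  by_contra hQ
  obtain ⟨β, hβ', hmin⟩ :=
    (P.posRoots.filter (¬ Q ·)).exists_min_image P.ht ⟨β, Finset.mem_filter.mpr ⟨hβ, hQ⟩⟩
  obtain ⟨hβ, hQ⟩ := Finset.mem_filter.mp hβ'
  have hβΔ : β ∉ P.Δ := fun h => hQ (simple β h)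
  obtain ⟨a, ha, -, hB⟩ := P.exists_coord_pos_B_pos hβ
  have hγ := P.refl_mem_posRoots_of_B_pos hβ hβΔ ha hB
  have hQγ : Q (P.refl a β) := by
    by_contra h
    exact (P.ht_refl_lt_ht ha hB).not_ge (hmin _ (Finset.mem_filter.mpr ⟨hγ, h⟩))
  exact hQ (P.refl_refl a β ▸ refl _ hγ a ha hQγ)

/-! Connectedness of the Dynkin diagram -/

def SupportedOn (S : Set V) (v : V) : Prop := ∀ a ∈ P.Δ, a ∉ S → P.coord v a = 0

variable {P}

lemma SupportedOn.neg {S : Set V} {v : V} (h : P.SupportedOn S v) : P.SupportedOn S (-v) :=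
  fun a ha haS => by rw [P.coord_neg _ ha, h a ha haS, neg_zero]

variable (P)

lemma supportedOn_simple {S : Set V} {a : V} (ha : a ∈ P.Δ) (haS : a ∈ S) : P.SupportedOn S a :=
  fun _ hb hbS => P.coord_of_ne ha hb (ne_of_mem_of_not_mem haS hbS).symm

lemma B_eq_zero_of_supportedOn {S : Set V}
    (horth : ∀ a ∈ P.Δ, a ∈ S → ∀ b ∈ P.Δ, b ∉ S → P.B a b = 0) {u v : V}
    (hu : P.SupportedOn S u) (hv : P.SupportedOn Sᶜ v) : P.B u v = 0 := by
  rw [P.B_eq_sum_coord_left]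
  refine Finset.sum_eq_zero fun a ha => ?_
  by_cases haS : a ∈ S
  · rw [P.B_eq_sum_coord_right, Finset.sum_eq_zero fun b hb => ?_, mul_zero]
    by_cases hbS : b ∈ S
    · rw [hv b hb (not_not.mpr hbS), zero_mul]
    · rw [horth a ha haS b hb hbS, mul_zero]
  · rw [hu a ha haS, zero_mul]

lemma refl_supportedOn {S : Set V}
    (horth : ∀ a ∈ P.Δ, a ∈ S → ∀ b ∈ P.Δ, b ∉ S → P.B a b = 0) {a γ : V} (ha : a ∈ P.Δ)
    (hγ : P.SupportedOn S γ) : P.SupportedOn S (P.refl a γ) := by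
  by_cases haS : a ∈ S
  · intro b hb hbS
    rw [P.coord_refl_of_ne ha hb (ne_of_mem_of_not_mem haS hbS).symm, hγ b hb hbS]
  · rwa [P.refl_eq_self (by rw [P.B_symm]; exact
      P.B_eq_zero_of_supportedOn horth hγ (P.supportedOn_simple ha haS))]

lemma supportedOn_or_supportedOn_compl {S : Set V}
    (horth : ∀ a ∈ P.Δ, a ∈ S → ∀ b ∈ P.Δ, b ∉ S → P.B a b = 0) {β : V} (hβ : β ∈ P.Φ) :
    P.SupportedOn S β ∨ P.SupportedOn Sᶜ β := by
  have horth' : ∀ a ∈ P.Δ, a ∈ Sᶜ → ∀ b ∈ P.Δ, b ∉ Sᶜ → P.B a b = 0 :=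
    fun a ha haS b hb hbS => by rw [P.B_symm]; exact horth b hb (not_not.mp hbS) a ha haS
  have key : ∀ γ ∈ P.posRoots, P.SupportedOn S γ ∨ P.SupportedOn Sᶜ γ := fun γ hγ =>
    P.posRoots_induction
      (fun a ha => (em (a ∈ S)).imp (P.supportedOn_simple ha) (P.supportedOn_simple ha))
      (fun _ _ a ha => Or.imp (P.refl_supportedOn horth ha) (P.refl_supportedOn horth' ha)) hγ
  rcases P.mem_posRoots_or_neg_mem hβ with h | h
  · exact key β h
  · simpa using (key _ h).imp SupportedOn.neg SupportedOn.neg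

/-- `(v, b) ≥ 0` is a sum of the nonpositive terms `coord v x * (x, b)`, which must all vanish. -/
lemma B_simple_eq_zero_of_isDominant {v : V} (hv : ∀ a ∈ P.Δ, 0 ≤ P.coord v a)
    (hdom : P.IsDominant v) {a b : V} (ha : a ∈ P.Δ) (hva : P.coord v a ≠ 0) (hb : b ∈ P.Δ)
    (hvb : P.coord v b = 0) : P.B a b = 0 := by
  have hterms : ∀ x ∈ P.Δ, P.coord v x * P.B x b ≤ 0 := fun x hx => by
    rcases eq_or_ne x b with rfl | hxb
    · rw [hvb, zero_mul]
    · exact mul_nonpos_of_nonneg_of_nonpos (hv x hx) (P.B_simple_nonpos hx hb hxb)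
  have hsum : ∑ x ∈ P.Δ, P.coord v x * P.B x b = 0 :=
    le_antisymm (Finset.sum_nonpos hterms) (P.B_eq_sum_coord_left v b ▸ hdom b hb)
  exact (mul_eq_zero.mp ((Finset.sum_eq_zero_iff_of_nonpos hterms).mp hsum a ha)).resolve_left hva

/-- Otherwise its support and the rest of `Δ` would split `Φ` into two orthogonal parts. -/
lemma coord_pos_of_isDominant {m : V} (hm : m ∈ P.posRoots) (hdom : P.IsDominant m) {a : V}
    (ha : a ∈ P.Δ) : 0 < P.coord m a := by
  classical
  obtain ⟨hmΦ, hmnn⟩ := P.mem_posRoots.mp hm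
  refine (hmnn a ha).lt_of_ne' fun hma => ?_
  set S : Set V := {x | P.coord m x ≠ 0}
  have horth : ∀ x ∈ P.Δ, x ∈ S → ∀ y ∈ P.Δ, y ∉ S → P.B x y = 0 := fun x hx hxS y hy hyS =>
    P.B_simple_eq_zero_of_isDominant hmnn hdom hx hxS hy (not_not.mp hyS)
  have hs := P.irreducible (P.Φ.filter (P.SupportedOn S)) (Finset.filter_subset _ _)
    ⟨m, Finset.mem_filter.mpr ⟨hmΦ, fun x _ hx => not_not.mp hx⟩⟩ fun β hβ γ hγ hγs =>
      P.B_eq_zero_of_supportedOn horth (Finset.mem_filter.mp hβ).2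
        ((P.supportedOn_or_supportedOn_compl horth hγ).resolve_left
          fun h => hγs (Finset.mem_filter.mpr ⟨hγ, h⟩))
  have haS : P.SupportedOn S a := (Finset.mem_filter.mp (hs ▸ P.Δ_sub ha : a ∈ _)).2
  simpa [P.coord_self ha] using haS a ha (not_not.mpr hma)

/-! The highest root -/

lemma eq_of_coord_le_of_ht_le {u v : V} (h : ∀ a ∈ P.Δ, P.coord u a ≤ P.coord v a)
    (hht : P.ht v ≤ P.ht u) : u = v :=
  P.eq_of_coord_eq ((Finset.sum_eq_sum_iff_of_le h).mp (le_antisymm (Finset.sum_le_sum h) hht))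

lemma isDominant_of_ht_max {m : V} (hm : m ∈ P.posRoots)
    (hmax : ∀ γ ∈ P.posRoots, (∀ a ∈ P.Δ, P.coord m a ≤ P.coord γ a) → P.ht γ ≤ P.ht m) :
    P.IsDominant m := by
  intro a ha
  by_contra! hneg
  have hup : ∀ b ∈ P.Δ, P.coord m b ≤ P.coord (P.refl a m) b := fun b hb => by
    rcases eq_or_ne b a with rfl | hba
    · have : 2 * P.B b m / P.B b b < 0 :=
        div_neg_of_neg_of_pos (by rw [P.B_symm]; linarith) (P.B_self_pos (P.Δ_sub hb))
      rw [P.coord_refl_self hb]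
      linarith
    · rw [P.coord_refl_of_ne ha hb hba]
  obtain ⟨hmΦ, hmnn⟩ := P.mem_posRoots.mp hm
  have hpos : P.refl a m ∈ P.posRoots := P.mem_posRoots.mpr
    ⟨P.refl_mem (P.Δ_sub ha) hmΦ, fun b hb => (hmnn b hb).trans (hup b hb)⟩
  exact (P.ht_lt_ht_refl ha hneg).not_ge (hmax _ hpos hup)

lemma B_pos_of_isDominant {h m : V} (hh : h ∈ P.posRoots) (hdom : P.IsDominant h)
    (hm : ∀ a ∈ P.Δ, 0 < P.coord m a) : 0 < P.B h m := by
  obtain ⟨a, ha, -, hB⟩ := P.exists_coord_pos_B_pos hh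
  rw [P.B_eq_sum_coord_right]
  exact Finset.sum_pos' (fun b hb => mul_nonneg (hm b hb).le (hdom b hb))
    ⟨a, ha, mul_pos (hm a ha) hB⟩

/-- A positive root `m` of maximal height among those above `β` is dominant with full support,
so `h - m` is a root unless `h = m`, and its sign is forced by the maximality of `h`. -/
lemma coord_le_of_ht_max {h β : V} (hh : h ∈ P.posRoots)
    (hmax : ∀ γ ∈ P.posRoots, P.ht γ ≤ P.ht h) (hβ : β ∈ P.posRoots) {a : V} (ha : a ∈ P.Δ) :
    P.coord β a ≤ P.coord h a := by
  classical
  obtain ⟨m, hm', hmmax⟩ := (P.posRoots.filter fun γ => ∀ b ∈ P.Δ, P.coord β b ≤ P.coord γ b)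
    |>.exists_max_image P.ht ⟨β, Finset.mem_filter.mpr ⟨hβ, fun _ _ => le_rfl⟩⟩
  obtain ⟨hm, hβm⟩ := Finset.mem_filter.mp hm'
  have hmdom : P.IsDominant m := P.isDominant_of_ht_max hm fun γ hγ hmγ =>
    hmmax γ (Finset.mem_filter.mpr ⟨hγ, fun b hb => (hβm b hb).trans (hmγ b hb)⟩)
  have hhdom : P.IsDominant h := P.isDominant_of_ht_max hh fun γ hγ _ => hmax γ hγ
  refine (hβm a ha).trans ?_
  rcases eq_or_ne h m with rfl | hne
  · exact le_rfl
  have hB := P.B_pos_of_isDominant hh hhdom fun b hb => P.coord_pos_of_isDominant hm hmdom hb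
  have hΦ := P.sub_mem_of_B_pos (P.mem_posRoots.mp hh).1 (P.mem_posRoots.mp hm).1 hB hne
  rcases P.pos_or_neg _ hΦ with hp | hn
  · simpa [P.coord_sub _ _ ha] using hp a ha
  · refine absurd (P.eq_of_coord_le_of_ht_le (fun b hb => ?_) (hmax m hm)) hne
    simpa [P.coord_sub _ _ hb] using hn b hb

lemma exists_isHighestRoot (hΔ : P.Δ.Nonempty) : ∃ h, P.IsHighestRoot h := by
  obtain ⟨a, ha⟩ := hΔ
  obtain ⟨h, hh, hmax⟩ := P.posRoots.exists_max_image P.ht ⟨a, P.simple_mem_posRoots ha⟩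
  exact ⟨h, (P.mem_posRoots.mp hh).1, fun β hβ b hb => P.coord_le_of_ht_max hh hmax hβ hb⟩

lemma coroot_smul (c : ℚ) (v : V) : P.coroot (c • v) = c⁻¹ • P.coroot v := by
  rcases eq_or_ne c 0 with rfl | hc
  · simp [coroot]
  simp only [coroot, map_smul, LinearMap.smul_apply, smul_eq_mul, smul_smul]
  congr 1
  field_simp

lemma coroot_coroot {β : V} (hβ : P.B β β ≠ 0) : P.coroot (P.coroot β) = β := by
  rw [show P.coroot β = (2 / P.B β β) • β from rfl, P.coroot_smul, coroot, smul_smul,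
    inv_mul_cancel₀ (div_ne_zero two_ne_zero hβ), one_smul]

lemma B_coroot_coroot (β γ : V) :
    P.B (P.coroot β) (P.coroot γ) = 2 / P.B β β * (2 / P.B γ γ) * P.B β γ := by
  simp only [coroot, map_smul, LinearMap.smul_apply, smul_eq_mul]
  ring

lemma refl_apply_coroot (β γ : V) : P.refl β (P.coroot γ) = P.coroot (P.refl β γ) := by
  rw [coroot, coroot, P.B_refl_refl, map_smul]

lemma B_coroot_self_ne_zero {β : V} (hβ : P.B β β ≠ 0) : P.B (P.coroot β) (P.coroot β) ≠ 0 := by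
  rw [B_coroot_coroot]
  exact mul_ne_zero (mul_ne_zero (div_ne_zero two_ne_zero hβ) (div_ne_zero two_ne_zero hβ)) hβ

lemma refl_coroot {β : V} (hβ : P.B β β ≠ 0) : P.refl (P.coroot β) = P.refl β := by
  ext v
  rw [P.refl_apply (P.B_coroot_self_ne_zero hβ), P.refl_apply hβ, B_coroot_coroot]
  simp only [coroot, map_smul, LinearMap.smul_apply, smul_eq_mul, smul_smul]
  congr 2
  field_simp

lemma corootMult_eq (β : V) {a : V} (ha : a ∈ P.Δ) :
    P.corootMult β a = P.coord β a * P.B a a / P.B β β := by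
  rw [corootMult, coroot, P.coord_smul _ _ ha]
  ring

lemma corootMult_neg (β : V) {a : V} (ha : a ∈ P.Δ) : P.corootMult (-β) a = -P.corootMult β a := by
  simp only [P.corootMult_eq _ ha, P.coord_neg _ ha, map_neg, LinearMap.neg_apply, neg_neg]
  ring

lemma corootMult_nonneg {β a : V} (hβ : β ∈ P.Φ) (ha : a ∈ P.Δ) (h : 0 ≤ P.coord β a) :
    0 ≤ P.corootMult β a := by
  rw [P.corootMult_eq _ ha]
  have := P.B_self_pos hβ
  have := P.B_self_pos (P.Δ_sub ha)
  positivity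

lemma corootMult_nonpos {β a : V} (hβ : β ∈ P.Φ) (ha : a ∈ P.Δ) (h : P.coord β a ≤ 0) :
    P.corootMult β a ≤ 0 := by
  rw [P.corootMult_eq _ ha]
  exact div_nonpos_of_nonpos_of_nonneg
    (mul_nonpos_of_nonpos_of_nonneg h (P.B_self_pos (P.Δ_sub ha)).le) (P.B_self_pos hβ).le

lemma corootMult_int {β : V} (hβ : β ∈ P.Φ) {a : V} (ha : a ∈ P.Δ) :
    ∃ n : ℤ, P.corootMult β a = n := by
  suffices key : ∀ γ ∈ P.posRoots, ∀ a ∈ P.Δ, ∃ n : ℤ, P.corootMult γ a = n by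
    rcases P.mem_posRoots_or_neg_mem hβ with h | h
    · exact key β h a ha
    · obtain ⟨n, hn⟩ := key _ h a ha
      exact ⟨-n, by rw [Int.cast_neg, ← hn, P.corootMult_neg _ ha, neg_neg]⟩
  intro γ hγ
  refine P.posRoots_induction (Q := fun γ => ∀ a ∈ P.Δ, ∃ n : ℤ, P.corootMult γ a = n)
    (fun b hb a ha => ?simple) (fun γ hγ b hb ih a ha => ?refl) hγ
  case simple =>
    rcases eq_or_ne a b with rfl | hab
    · exact ⟨1, by rw [P.corootMult_eq _ ha, P.coord_self ha, one_mul,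
        div_self (P.B_self_ne_zero (P.Δ_sub ha)), Int.cast_one]⟩
    · exact ⟨0, by rw [P.corootMult_eq _ ha, P.coord_of_ne hb ha hab, zero_mul, zero_div,
        Int.cast_zero]⟩
  obtain ⟨n, hn⟩ := ih a ha
  have hγΦ := (P.mem_posRoots.mp hγ).1
  rw [P.corootMult_eq _ ha, P.B_refl_refl]
  rcases eq_or_ne a b with rfl | hab
  · obtain ⟨q, hq⟩ := P.integral γ hγΦ a (P.Δ_sub ha)
    refine ⟨n - q, ?_⟩
    rw [P.coord_refl_self ha, Int.cast_sub, ← hn, ← hq, P.corootMult_eq _ ha, P.B_symm a γ]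
    field_simp [P.B_self_ne_zero (P.Δ_sub ha)]
  · exact ⟨n, by rw [P.coord_refl_of_ne hb ha hab, ← P.corootMult_eq _ ha, hn]⟩

/-! The dual root system `Φ^∨` with base `Δ^∨` -/

section Dual

open Classical

lemma coroot_injOn : Set.InjOn P.coroot P.Φ := fun β hβ γ hγ h => by
  rw [← P.coroot_coroot (P.B_self_ne_zero hβ), h, P.coroot_coroot (P.B_self_ne_zero hγ)]

lemma B_coroot_coroot_eq_zero_iff {β γ : V} (hβ : β ∈ P.Φ) (hγ : γ ∈ P.Φ) :
    P.B (P.coroot β) (P.coroot γ) = 0 ↔ P.B β γ = 0 := by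
  rw [B_coroot_coroot, mul_eq_zero_iff_left]
  exact mul_ne_zero (div_ne_zero two_ne_zero (P.B_self_ne_zero hβ))
    (div_ne_zero two_ne_zero (P.B_self_ne_zero hγ))

/-- The coordinate of `v` along `a^∨` is `coord v a * (a, a) / 2`. -/
noncomputable def dual : RootSystemBase V where
  B := P.B
  B_symm := P.B_symm
  B_posdef := P.B_posdef
  Φ := P.Φ.image P.coroot
  zero_notMem h := by
    obtain ⟨β, hβ, h0⟩ := Finset.mem_image.mp h
    exact P.ne_zero_of_mem hβ (by rw [← P.coroot_coroot (P.B_self_ne_zero hβ), h0]; simp [coroot])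
  span_top := by
    refine eq_top_iff.mpr (P.span_top ▸ Submodule.span_le.mpr fun β hβ => ?_)
    rw [SetLike.mem_coe, ← P.coroot_coroot (P.B_self_ne_zero hβ), coroot]
    exact Submodule.smul_mem _ _ (Submodule.subset_span (Finset.mem_image_of_mem _ hβ))
  reflect_mem := by
    simp only [Finset.forall_mem_image]
    intro β hβ γ hγ
    rw [← P.refl_apply (P.B_coroot_self_ne_zero (P.B_self_ne_zero hβ)),
      P.refl_coroot (P.B_self_ne_zero hβ), P.refl_apply_coroot]
    exact Finset.mem_image_of_mem _ (P.refl_mem hβ hγ)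
  integral := by
    simp only [Finset.forall_mem_image]
    intro β hβ γ hγ
    obtain ⟨n, hn⟩ := P.integral γ hγ β hβ
    refine ⟨n, ?_⟩
    rw [← hn, B_coroot_coroot, B_coroot_coroot, P.B_symm β γ]
    field_simp [P.B_self_ne_zero hβ, P.B_self_ne_zero hγ]
  reduced := by
    simp only [Finset.forall_mem_image]
    intro β hβ c hc
    obtain ⟨γ, hγ, hc⟩ := Finset.mem_image.mp hc
    have hγβ : γ = c⁻¹ • β := by
      rw [← P.coroot_coroot (P.B_self_ne_zero hγ), hc, coroot_smul,
        P.coroot_coroot (P.B_self_ne_zero hβ)]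
    rcases P.reduced β hβ _ (hγβ ▸ hγ) with h | h
    · exact Or.inl (inv_eq_one.mp h)
    · exact Or.inr (by rw [← inv_inv c, h, inv_neg, inv_one])
  irreducible s hs hne horth := by
    have hpre := P.irreducible (P.Φ.filter fun β => P.coroot β ∈ s) (Finset.filter_subset _ _)
      (by
        obtain ⟨_, hu⟩ := hne
        obtain ⟨β, hβ, rfl⟩ := Finset.mem_image.mp (hs hu)
        exact ⟨β, Finset.mem_filter.mpr ⟨hβ, hu⟩⟩)
      fun β hβ γ hγ hγs => by
        obtain ⟨hβΦ, hβs⟩ := Finset.mem_filter.mp hβ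
        exact (P.B_coroot_coroot_eq_zero_iff hβΦ hγ).mp <| horth _ hβs _
          (Finset.mem_image_of_mem _ hγ) fun h => hγs (Finset.mem_filter.mpr ⟨hγ, h⟩)
    refine (hs.antisymm fun u hu => ?_)
    obtain ⟨γ, hγ, rfl⟩ := Finset.mem_image.mp hu
    exact (Finset.mem_filter.mp (hpre.symm ▸ hγ : γ ∈ _)).2
  Δ := P.Δ.image P.coroot
  Δ_sub := Finset.image_subset_image P.Δ_sub
  Δ_indep := by
    have h : LinearIndepOn ℚ (id ∘ P.coroot) (P.Δ : Set V) := P.Δ_indep.units_smul fun a =>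
      Units.mk0 (2 / P.B a a) (div_ne_zero two_ne_zero (P.B_self_ne_zero (P.Δ_sub a.2)))
    have := h.image_of_comp
    rwa [← Finset.coe_image] at this
  coord v u := P.coord v (P.coroot u) * (P.B (P.coroot u) (P.coroot u) / 2)
  coord_spec v := by
    rw [Finset.sum_image fun a ha b hb => P.coroot_injOn (P.Δ_sub ha) (P.Δ_sub hb)]
    conv_lhs => rw [P.coord_spec v]
    refine Finset.sum_congr rfl fun a ha => ?_
    rw [P.coroot_coroot (P.B_self_ne_zero (P.Δ_sub ha)), coroot, smul_smul]
    congr 1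
    field_simp [P.B_self_ne_zero (P.Δ_sub ha)]
  coord_int := by
    simp only [Finset.forall_mem_image]
    intro β hβ a ha
    rw [P.coroot_coroot (P.B_self_ne_zero (P.Δ_sub ha))]
    exact P.corootMult_int hβ ha
  pos_or_neg := by
    simp only [Finset.forall_mem_image]
    intro β hβ
    refine (P.pos_or_neg β hβ).imp (fun h a ha => ?_) fun h a ha => ?_ <;>
      rw [P.coroot_coroot (P.B_self_ne_zero (P.Δ_sub ha))]
    exacts [P.corootMult_nonneg hβ ha (h a ha), P.corootMult_nonpos hβ ha (h a ha)]

lemma dual_coord_coroot (β : V) {a : V} (ha : a ∈ P.Δ) :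
    P.dual.coord (P.coroot β) (P.coroot a) = P.corootMult β a := by
  show P.coord _ (P.coroot (P.coroot a)) * _ = _
  rw [P.coroot_coroot (P.B_self_ne_zero (P.Δ_sub ha))]
  rfl

lemma coroot_mem_dual_posRoots {β : V} (hβ : β ∈ P.posRoots) : P.coroot β ∈ P.dual.posRoots := by
  obtain ⟨hβΦ, hβnn⟩ := P.mem_posRoots.mp hβ
  refine P.dual.mem_posRoots.mpr ⟨Finset.mem_image_of_mem _ hβΦ, ?_⟩
  intro u hu
  obtain ⟨a, ha, rfl⟩ := Finset.mem_image.mp hu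
  rw [P.dual_coord_coroot β ha]
  exact P.corootMult_nonneg hβΦ ha (hβnn a ha)

lemma exists_isDualHighest (hΔ : P.Δ.Nonempty) : ∃ h₂, P.IsDualHighest h₂ := by
  obtain ⟨h, hhΦ, hmax⟩ := P.dual.exists_isHighestRoot (hΔ.image _)
  obtain ⟨h₂, hh₂, rfl⟩ := Finset.mem_image.mp hhΦ
  refine ⟨h₂, hh₂, fun β hβ a ha => ?_⟩
  simpa only [P.dual_coord_coroot _ ha] using
    hmax _ (P.coroot_mem_dual_posRoots hβ) _ (Finset.mem_image_of_mem _ ha)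

end Dual

/-! Special and co-special simple roots -/

variable {P}

lemma IsSpecial.coord_le_one {α β : V} (hα : P.IsSpecial α) (hβ : β ∈ P.posRoots) :
    P.coord β α ≤ 1 := by
  obtain ⟨h, hh⟩ := P.exists_isHighestRoot ⟨α, hα.1⟩
  exact hα.2 h hh ▸ hh.2 β hβ α hα.1

lemma IsCospecial.corootMult_le_one {α β : V} (hα : P.IsCospecial α) (hβ : β ∈ P.posRoots) :
    P.corootMult β α ≤ 1 := by
  obtain ⟨h₂, hh₂⟩ := P.exists_isDualHighest ⟨α, hα.1⟩
  exact hα.2 h₂ hh₂ ▸ hh₂.2 β hβ α hα.1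

variable (P)

lemma B_simple_nonneg_of_coord_eq_one {α v : V} (hsp : P.IsSpecial α ∨ P.IsCospecial α)
    (hα : α ∈ P.Δ) (hv : v ∈ P.Φ) (hvα : P.coord v α = 1) (hlen : P.B v v = P.B α α) :
    0 ≤ P.B v α := by
  by_contra! hneg
  have hαα := P.B_self_pos (P.Δ_sub hα)
  obtain ⟨n, hn⟩ := P.integral α (P.Δ_sub hα) v hv
  have hn1 : n ≤ -1 := by
    have : (n : ℚ) < 0 := hn ▸ div_neg_of_neg_of_pos (by rw [P.B_symm]; linarith) hαα
    exact Int.le_sub_one_of_lt (by exact_mod_cast this)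
  have hβα : 2 ≤ P.coord (P.refl α v) α := by
    rw [P.coord_refl_self hα, hvα, hn]
    have : (n : ℚ) ≤ -1 := by exact_mod_cast hn1
    linarith
  have hβ : P.refl α v ∈ P.posRoots := by
    have hΦ := P.refl_mem (P.Δ_sub hα) hv
    refine (P.pos_or_neg _ hΦ).elim (fun h => P.mem_posRoots.mpr ⟨hΦ, h⟩) fun h => ?_
    linarith [h α hα]
  rcases hsp with hsp | hsp
  · linarith [hsp.coord_le_one hβ]
  · have := hsp.corootMult_le_one hβ
    rw [P.corootMult_eq _ hα, P.B_refl_refl, hlen, mul_div_cancel_right₀ _ hαα.ne'] at this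
    linarith

lemma exists_ht_max_leviWeyl_apply {α : V} (hα : α ∈ P.Φ) :
    ∃ w ∈ P.leviWeyl α, ∀ w' ∈ P.leviWeyl α, P.ht (w' α) ≤ P.ht (w α) := by
  classical
  obtain ⟨v, hv, hmax⟩ := (P.Φ.filter fun v => ∃ w ∈ P.leviWeyl α, w α = v).exists_max_image
    P.ht ⟨α, Finset.mem_filter.mpr ⟨hα, 1, one_mem _, rfl⟩⟩
  obtain ⟨-, w, hw, rfl⟩ := Finset.mem_filter.mp hv
  refine ⟨w, hw, fun w' hw' => hmax _ (Finset.mem_filter.mpr ⟨?_, w', hw', rfl⟩)⟩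
  exact P.apply_mem_of_mem_weylGroup (P.leviWeyl_le_weylGroup α hw') hα

lemma isDominantAway_of_ht_max {α : V} {w : V ≃ₗ[ℚ] V} (hw : w ∈ P.leviWeyl α)
    (hmax : ∀ w' ∈ P.leviWeyl α, P.ht (w' α) ≤ P.ht (w α)) : P.IsDominantAway α (w α) := by
  intro a ha haα
  by_contra! hneg
  have := hmax _ (mul_mem (Subgroup.subset_closure ⟨a, ha, haα, rfl⟩) hw)
  rw [LinearEquiv.mul_apply] at this
  exact (P.ht_lt_ht_refl ha hneg).not_ge this

end RootSystemBase

open RootSystemBase in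
theorem leviDominant_of_special_or_cospecial_general
    {V : Type*} [AddCommGroup V] [Module ℚ V]
    (P : RootSystemBase V) (α : V) (hα : α ∈ P.Δ)
    (hsp : P.IsSpecial α ∨ P.IsCospecial α) :
    ∃ w ∈ P.leviWeyl α, P.IsDominant (w α) := by
  obtain ⟨w, hw, hmax⟩ := P.exists_ht_max_leviWeyl_apply (P.Δ_sub hα)
  have hwW := P.leviWeyl_le_weylGroup α hw
  refine ⟨w, hw, fun a ha => ?_⟩
  rcases eq_or_ne a α with rfl | haα
  · exact P.B_simple_nonneg_of_coord_eq_one hsp ha (P.apply_mem_of_mem_weylGroup hwW (P.Δ_sub ha))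
      (by rw [P.coord_apply_of_mem_leviWeyl ha hw, P.coord_self ha])
      (P.B_apply_apply_of_mem_weylGroup hwW a a)
  · exact P.isDominantAway_of_ht_max hw hmax a ha haα

open RootSystemBase in
/-- If `α ∈ Δ` is special or co-special then `dom(α) = dom_α(α)`:
there exists `w ∈ W_α` such that `w α` is `Δ`-dominant. -/
theorem leviDominant_of_special_or_cospecial
    {V : Type*} [AddCommGroup V] [Module ℚ V] [FiniteDimensional ℚ V]
    (P : RootSystemBase V) (α : V) (hα : α ∈ P.Δ)
    (hsp : P.IsSpecial α ∨ P.IsCospecial α) :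
    ∃ w ∈ P.leviWeyl α, P.IsDominant (w α) :=
  leviDominant_of_special_or_cospecial_general P α hα hsp
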